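/- arXiv:2312.12085 — 3 statements merged into one kernel-verified Lean document; each statement's English description precedes it below -/
import Mathlib

section
/- Let ψ : ℝ → ℝ satisfy ψ(T) ≥ T for all sufficiently large T and ψ(T) ~ T as T → ∞, and let c₀ ∈ ℝ be such that ∫₀^{ψ(T)} |ζ(1/2+it)|² dt = T ln T + (γ − ln 2π) T + c₀ + O(ln T / T) as T → ∞. Assume Dirichlet's estimate. Then D(ψ(T)) − D(T) − ∫_{ψ(T)}^{ψ(ψ(T))} |ζ(1/2+it)|² dt = (γ + ln 2π − 1)(ψ(T) − T) + O(√T) as T → ∞. -/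
open Filter Asymptotics Real

/-- Dirichlet summatory divisor function `D(x) = ∑_{n ≤ x} d(n)`. -/
noncomputable def D (x : ℝ) : ℝ := ∑ n ∈ Finset.Icc 1 ⌊x⌋₊, ((Nat.divisors n).card : ℝ)

/-- `|ζ(1/2 + it)|²`. -/
noncomputable def zsq (t : ℝ) : ℝ := ‖riemannZeta (1/2 + t * Complex.I)‖ ^ 2

/-- `S₁(t) = (1/π) ∫₀ᵗ arg ζ(1/2 + iu) du`. -/
noncomputable def S1 (t : ℝ) : ℝ := (1 / Real.pi) * ∫ u in (0:ℝ)..t, (riemannZeta (1/2 + u * Complex.I)).arg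

/-- Euler–Mascheroni constant `γ`. -/
noncomputable def γ : ℝ := Real.eulerMascheroniConstant

/-! Writing `Z(x) = ∫₀ˣ |ζ(1/2+it)|² dt`, the integral over `[ψ(T), ψ(ψ(T))]` is
`Z(ψ(ψ(T))) - Z(ψ(T))`, so the quantity to estimate is a signed sum of four error terms: those of
Dirichlet's estimate at `ψ(T)` and at `T`, and those of the Hardy–Littlewood formula at `ψ(T)` and
at `T`, the main terms cancelling identically. Each error is `O(√T)`: `ln T / T ≤ √T`, and an
error `O(√x)` evaluated at `x = ψ(T)` stays `O(√T)` because `ψ(T) ~ T`. -/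

lemma continuous_zsq : Continuous zsq := by
  have hline (t : ℝ) : (1/2 + t * Complex.I : ℂ) ≠ 1 := fun h => by
    simpa using congrArg Complex.re h
  have hζ : Continuous fun t : ℝ => riemannZeta (1/2 + t * Complex.I) :=
    continuous_iff_continuousAt.2 fun t =>
      (differentiableAt_riemannZeta (hline t)).continuousAt.comp
        (f := fun t : ℝ => 1/2 + t * Complex.I) (by fun_prop)
  exact hζ.norm.pow 2

lemma intervalIntegral_zsq_eq_sub (a b : ℝ) :
    ∫ t in a..b, zsq t = (∫ t in (0:ℝ)..b, zsq t) - ∫ t in (0:ℝ)..a, zsq t :=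
  (intervalIntegral.integral_interval_sub_left (continuous_zsq.intervalIntegrable _ _)
    (continuous_zsq.intervalIntegrable _ _)).symm

lemma isBigO_log_div_self_sqrt_atTop : (fun T : ℝ => log T / T) =O[atTop] (fun T => √T) :=
  (isLittleO_log_id_atTop.tendsto_div_nhds_zero.isBigO_one ℝ).trans
    ((isLittleO_one_left_iff ℝ).2 (tendsto_norm_atTop_atTop.comp tendsto_sqrt_atTop)).isBigO

section

variable {ψ : ℝ → ℝ} {c : ℝ}

lemma tendsto_atTop_of_tendsto_div_self (hψ : Tendsto (fun T => ψ T / T) atTop (nhds c))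
    (hc : 0 < c) : Tendsto ψ atTop atTop :=
  (hψ.pos_mul_atTop hc tendsto_id).congr' <| by
    filter_upwards [eventually_ne_atTop 0] with T hT
    exact div_mul_cancel₀ (ψ T) hT

lemma isBigO_sqrt_of_tendsto_div_self (hψ : Tendsto (fun T => ψ T / T) atTop (nhds c)) :
    (fun T => √(ψ T)) =O[atTop] (fun T => √T) :=
  (isBigO_of_div_tendsto_nhds (eventually_ne_atTop 0 |>.mono fun _ h h0 => absurd h0 h) c hψ
    |>.sqrt (eventually_ge_atTop 0))

lemma Asymptotics.IsBigO.comp_of_tendsto_div_self {f : ℝ → ℝ}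
    (hf : f =O[atTop] (fun T => √T)) (hψ : Tendsto (fun T => ψ T / T) atTop (nhds c))
    (hc : 0 < c) : (fun T => f (ψ T)) =O[atTop] (fun T => √T) :=
  (hf.comp_tendsto (tendsto_atTop_of_tendsto_div_self hψ hc)).trans
    (isBigO_sqrt_of_tendsto_div_self hψ)

end

theorem D_increment_general (ψ : ℝ → ℝ) (c₀ : ℝ)
    (hsim : Tendsto (fun T : ℝ => ψ T / T) atTop (nhds 1))
    (hHL : (fun T : ℝ => (∫ t in (0:ℝ)..ψ T, zsq t) -
        (T * Real.log T + (γ - Real.log (2 * Real.pi)) * T + c₀)) =O[atTop]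
      (fun T : ℝ => Real.log T / T))
    (hDir : (fun T : ℝ => D T - (T * Real.log T + (2 * γ - 1) * T)) =O[atTop]
      (fun T : ℝ => Real.sqrt T)) :
    (fun T : ℝ => (D (ψ T) - D T - ∫ t in ψ T..ψ (ψ T), zsq t) -
        (γ + Real.log (2 * Real.pi) - 1) * (ψ T - T)) =O[atTop]
      (fun T : ℝ => Real.sqrt T) := by
  have hHL' := hHL.trans isBigO_log_div_self_sqrt_atTop
  have hDirψ := hDir.comp_of_tendsto_div_self hsim one_pos
  have hHLψ := hHL'.comp_of_tendsto_div_self hsim one_pos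
  refine (((hDirψ.sub hDir).sub hHLψ).add hHL').congr' ?_ .rfl
  filter_upwards with T
  rw [intervalIntegral_zsq_eq_sub (ψ T)]
  ring

/-- Under the hypotheses on ψ, the almost-exact HL formula and Dirichlet's estimate, one has
`D(ψ(T)) − D(T) − ∫_{ψ(T)}^{ψ(ψ(T))} |ζ|² = (γ + ln 2π − 1)(ψ(T) − T) + O(√T)`. -/
theorem D_increment (ψ : ℝ → ℝ) (c₀ : ℝ)
    (hge : ∀ᶠ T : ℝ in atTop, T ≤ ψ T)
    (hsim : Tendsto (fun T : ℝ => ψ T / T) atTop (nhds 1))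
    (hHL : (fun T : ℝ => (∫ t in (0:ℝ)..ψ T, zsq t) -
        (T * Real.log T + (γ - Real.log (2 * Real.pi)) * T + c₀)) =O[atTop]
      (fun T : ℝ => Real.log T / T))
    (hDir : (fun T : ℝ => D T - (T * Real.log T + (2 * γ - 1) * T)) =O[atTop]
      (fun T : ℝ => Real.sqrt T)) :
    (fun T : ℝ => (D (ψ T) - D T - ∫ t in ψ T..ψ (ψ T), zsq t) -
        (γ + Real.log (2 * Real.pi) - 1) * (ψ T - T)) =O[atTop]
      (fun T : ℝ => Real.sqrt T) :=
  D_increment_general ψ c₀ hsim hHL hDir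
end

section
/- Let ψ : ℝ → ℝ satisfy ψ(T) ≥ T for all sufficiently large T and ψ(T) − T ~ (1−γ) T / ln T as T → ∞, let c₀ ∈ ℝ and δ ∈ (0, 1/2), and suppose: (i) ∫₀^{ψ(T)} |ζ(1/2+it)|² dt = T ln T + (γ − ln 2π) T + c₀ + O(ln T / T) as T → ∞; (ii) ∫_T^{ψ(T)} |ζ(1/2+it)|² dt = (1−γ) T + O(T^{1/3+δ}) as T → ∞. Assume Dirichlet's estimate. Then for every fixed natural number r ≥ 1, D(ψ^r(T)) − D(ψ^{r−1}(T)) = ∫_{ψ^{r−1}(T)}^{ψ^r(T)} |ζ(1/2+it)|² dt + O(T / ln T) as T → ∞, where ψ^r denotes the r-fold iterate of ψ. -/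
open Filter Asymptotics Real

lemma isBigO_rpow_div_log {e : ℝ} (he : e < 1) :
    (fun T : ℝ => T ^ e) =O[atTop] fun T => T / log T := by
  have h : (fun T : ℝ => T ^ e * log T) =O[atTop] fun T => T ^ e * T ^ (1 - e) :=
    (isBigO_refl _ _).mul (isLittleO_log_rpow_atTop (sub_pos.2 he)).isBigO
  refine (h.mul (isBigO_refl (fun T => (log T)⁻¹) _)).congr' ?_ ?_
  · filter_upwards [eventually_gt_atTop 1] with T hT
    field_simp [(log_pos hT).ne']
  · filter_upwards [eventually_gt_atTop 0] with T hT
    rw [← rpow_add hT, add_sub_cancel, rpow_one, div_eq_mul_inv]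

lemma isBigO_sqrt_div_log : (fun T : ℝ => √T) =O[atTop] fun T => T / log T :=
  (isBigO_rpow_div_log (by norm_num)).congr_left fun T => (sqrt_eq_rpow T).symm

lemma isBigO_log_div_self_div_log : (fun T : ℝ => log T / T) =O[atTop] fun T => T / log T := by
  have h : Tendsto (fun T : ℝ => log T / T) atTop (nhds 0) := by
    simpa using tendsto_pow_log_div_mul_add_atTop 1 0 1 one_ne_zero
  exact (h.isBigO_one ℝ).trans
    ((isBigO_rpow_div_log zero_lt_one).congr_left fun T => rpow_zero T)

lemma isLittleO_div_log_id : (fun T : ℝ => T / log T) =o[atTop] fun T => T := by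
  have h : (fun T : ℝ => (log T)⁻¹) =o[atTop] fun _ => (1 : ℝ) :=
    (isLittleO_one_iff ℝ).2 tendsto_log_atTop.inv_tendsto_atTop
  simpa [div_eq_mul_inv] using (isBigO_refl (fun T : ℝ => T) atTop).mul_isLittleO h

def IsNearIdentity (g : ℝ → ℝ) : Prop :=
  (∀ᶠ T in atTop, T ≤ g T) ∧ (fun T => g T - T) =O[atTop] fun T => T / log T

namespace IsNearIdentity

variable {g h : ℝ → ℝ}

lemma id : IsNearIdentity id :=
  ⟨.of_forall fun _ => le_rfl, by simpa using isBigO_zero _ _⟩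

lemma tendsto_atTop (hg : IsNearIdentity g) : Tendsto g atTop atTop :=
  tendsto_atTop_mono' _ hg.1 tendsto_id

lemma eventually_le_two_mul (hg : IsNearIdentity g) : ∀ᶠ T in atTop, g T ≤ 2 * T := by
  filter_upwards [(hg.2.trans_isLittleO isLittleO_div_log_id).def one_pos,
    eventually_ge_atTop 0] with T hT hT0
  rw [one_mul, norm_of_nonneg hT0, norm_eq_abs] at hT
  linarith [le_abs_self (g T - T)]

lemma div_log_comp_isBigO (hg : IsNearIdentity g) :
    (fun T => g T / log (g T)) =O[atTop] fun T => T / log T := by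
  refine IsBigO.of_bound 2 ?_
  filter_upwards [hg.1, hg.eventually_le_two_mul, eventually_gt_atTop 1] with T hT hT2 hT1
  have hlog : 0 < log T := log_pos hT1
  have hlog_le : log T ≤ log (g T) := log_le_log (by linarith) hT
  rw [norm_of_nonneg (div_nonneg (by linarith) (hlog.trans_le hlog_le).le),
    norm_of_nonneg (div_nonneg (by linarith) hlog.le)]
  calc g T / log (g T) ≤ g T / log T := div_le_div_of_nonneg_left (by linarith) hlog hlog_le
    _ ≤ 2 * T / log T := div_le_div_of_nonneg_right hT2 hlog.le
    _ = 2 * (T / log T) := mul_div_assoc _ _ _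

lemma isBigO_comp (hg : IsNearIdentity g) {f : ℝ → ℝ}
    (hf : f =O[atTop] fun T => T / log T) :
    (fun T => f (g T)) =O[atTop] fun T => T / log T :=
  (hf.comp_tendsto hg.tendsto_atTop).trans hg.div_log_comp_isBigO

lemma comp (hg : IsNearIdentity g) (hh : IsNearIdentity h) : IsNearIdentity (g ∘ h) := by
  refine ⟨?_, ?_⟩
  · filter_upwards [hh.1, hh.tendsto_atTop.eventually hg.1] with T h₁ h₂
    exact h₁.trans h₂
  · refine (hh.isBigO_comp hg.2).add hh.2 |>.congr_left fun T => ?_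
    simp only [Function.comp_apply]
    ring

lemma iterate (hg : IsNearIdentity g) : ∀ k : ℕ, IsNearIdentity g^[k]
  | 0 => id
  | k + 1 => by rw [Function.iterate_succ']; exact hg.comp (hg.iterate k)

end IsNearIdentity

lemma isNearIdentity_of_tendsto {ψ : ℝ → ℝ} {c : ℝ} (hc : c ≠ 0) (hge : ∀ᶠ T in atTop, T ≤ ψ T)
    (hsim : Tendsto (fun T => (ψ T - T) / (c * T / log T)) atTop (nhds 1)) :
    IsNearIdentity ψ := by
  refine ⟨hge, (isBigO_of_div_tendsto_nhds ?_ 1 hsim).trans ?_⟩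
  · filter_upwards [eventually_gt_atTop 1] with T hT h
    exact absurd h (div_ne_zero (mul_ne_zero hc (by linarith)) (log_pos hT).ne')
  · exact ((isBigO_refl _ _).const_mul_left c).congr_left fun T => (mul_div_assoc c T _).symm

lemma intervalIntegral_zsq_sub (a b : ℝ) :
    (∫ t in (0:ℝ)..b, zsq t) - ∫ t in (0:ℝ)..a, zsq t = ∫ t in a..b, zsq t :=
  intervalIntegral.integral_interval_sub_left (continuous_zsq.intervalIntegrable _ _)
    (continuous_zsq.intervalIntegrable _ _)

section Increment

variable {ψ : ℝ → ℝ} {c₀ : ℝ}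
  (hHL : (fun T : ℝ => (∫ t in (0:ℝ)..ψ T, zsq t) -
      (T * log T + (γ - log (2 * π)) * T + c₀)) =O[atTop] fun T => T / log T)
  (hint : (fun T : ℝ => (∫ t in T..ψ T, zsq t) - (1 - γ) * T) =O[atTop] fun T => T / log T)
include hHL hint

lemma integral_zsq_sub_isBigO :
    (fun T : ℝ => (∫ t in (0:ℝ)..T, zsq t) -
      (T * log T + (2 * γ - 1) * T - log (2 * π) * T + c₀)) =O[atTop] fun T => T / log T :=
  (hHL.sub hint).congr_left fun T => by rw [← intervalIntegral_zsq_sub T (ψ T)]; ring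

lemma dirichlet_main_term_increment (hψ : IsNearIdentity ψ) :
    (fun T => (ψ T * log (ψ T) + (2 * γ - 1) * ψ T) - (T * log T + (2 * γ - 1) * T) -
      (1 - γ) * T) =O[atTop] fun T => T / log T :=
  ((hHL.sub (hψ.isBigO_comp (integral_zsq_sub_isBigO hHL hint))).add
    (hψ.2.const_mul_left (log (2 * π)))).congr_left fun T => by ring

lemma D_sub_integral_zsq_isBigO (hψ : IsNearIdentity ψ)
    (hDir : (fun T : ℝ => D T - (T * log T + (2 * γ - 1) * T)) =O[atTop] fun T => T / log T) :
    (fun T => D (ψ T) - D T - ∫ t in T..ψ T, zsq t) =O[atTop] fun T => T / log T :=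
  ((((hψ.isBigO_comp hDir).sub hDir).add (dirichlet_main_term_increment hHL hint hψ)).sub
    hint).congr_left fun T => by ring

end Increment

theorem D_increment_iterates_general (ψ : ℝ → ℝ) (c₀ δ : ℝ) (hδ2 : δ < 1/2)
    (hge : ∀ᶠ T : ℝ in atTop, T ≤ ψ T)
    (hsim : Tendsto (fun T : ℝ => (ψ T - T) / ((1 - γ) * T / Real.log T)) atTop (nhds 1))
    (hHL : (fun T : ℝ => (∫ t in (0:ℝ)..ψ T, zsq t) -
        (T * Real.log T + (γ - Real.log (2 * Real.pi)) * T + c₀)) =O[atTop]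
      (fun T : ℝ => Real.log T / T))
    (hint : (fun T : ℝ => (∫ t in T..ψ T, zsq t) - (1 - γ) * T) =O[atTop]
      (fun T : ℝ => T ^ ((1:ℝ)/3 + δ)))
    (hDir : (fun T : ℝ => D T - (T * Real.log T + (2 * γ - 1) * T)) =O[atTop]
      (fun T : ℝ => Real.sqrt T)) :
    ∀ r : ℕ, 1 ≤ r →
      (fun T : ℝ => D (ψ^[r] T) - D (ψ^[r-1] T) - ∫ t in ψ^[r-1] T..ψ^[r] T, zsq t)
        =O[atTop] (fun T : ℝ => T / Real.log T) := by
  have hγ : γ < 1 := eulerMascheroniConstant_lt_two_thirds.trans (by norm_num)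
  have hψ : IsNearIdentity ψ := isNearIdentity_of_tendsto (sub_ne_zero.2 hγ.ne') hge hsim
  have step := D_sub_integral_zsq_isBigO (hHL.trans isBigO_log_div_self_div_log)
    (hint.trans (isBigO_rpow_div_log (by linarith))) hψ (hDir.trans isBigO_sqrt_div_log)
  intro r hr
  obtain ⟨k, rfl⟩ := Nat.exists_eq_add_of_le' hr
  simpa only [Nat.add_sub_cancel, Function.iterate_succ_apply'] using
    (hψ.iterate k).isBigO_comp step

/-- Lemma 1: `D(ψ^r(T)) − D(ψ^{r−1}(T)) = ∫_{ψ^{r−1}(T)}^{ψ^r(T)} |ζ(1/2+it)|² dt + O(T/ln T)`. -/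
theorem D_increment_iterates (ψ : ℝ → ℝ) (c₀ δ : ℝ) (hδ : 0 < δ) (hδ2 : δ < 1/2)
    (hge : ∀ᶠ T : ℝ in atTop, T ≤ ψ T)
    (hsim : Tendsto (fun T : ℝ => (ψ T - T) / ((1 - γ) * T / Real.log T)) atTop (nhds 1))
    (hHL : (fun T : ℝ => (∫ t in (0:ℝ)..ψ T, zsq t) -
        (T * Real.log T + (γ - Real.log (2 * Real.pi)) * T + c₀)) =O[atTop]
      (fun T : ℝ => Real.log T / T))
    (hint : (fun T : ℝ => (∫ t in T..ψ T, zsq t) - (1 - γ) * T) =O[atTop]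
      (fun T : ℝ => T ^ ((1:ℝ)/3 + δ)))
    (hDir : (fun T : ℝ => D T - (T * Real.log T + (2 * γ - 1) * T)) =O[atTop]
      (fun T : ℝ => Real.sqrt T)) :
    ∀ r : ℕ, 1 ≤ r →
      (fun T : ℝ => D (ψ^[r] T) - D (ψ^[r-1] T) - ∫ t in ψ^[r-1] T..ψ^[r] T, zsq t)
        =O[atTop] (fun T : ℝ => T / Real.log T) :=
  D_increment_iterates_general ψ c₀ δ hδ2 hge hsim hHL hint hDir
end

section
/- Theorem 2 (the second D-equivalent of the Fermat–Wiles theorem): Let ψ : ℝ → ℝ be such that for every fixed real x > 0, lim_{τ→∞} (1/ln τ) · ln( D(ψ(τ^x)) − D(τ^x) ) = x. Then the following are equivalent: (i) for all positive integers x, y, z, n with n ≥ 3, writing F = (xⁿ + yⁿ)/zⁿ, the function τ ↦ (1/ln τ) · ln( D(ψ(exp(F ln τ))) − D(exp(F ln τ)) ) does NOT tend to 1 as τ → ∞; (ii) for all positive integers x, y, z, n with n ≥ 3, xⁿ + yⁿ ≠ zⁿ. -/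
open Filter Asymptotics Real

/-! Since `exp (F * log τ) = τ ^ F`, the hypothesis on `ψ` makes the expression in (i) tend to
`F = (xⁿ + yⁿ) / zⁿ`; so it tends to `1` exactly when `F = 1`, i.e. when `xⁿ + yⁿ = zⁿ`. -/

section

variable {ψ : ℝ → ℝ}
  (hψ : ∀ x : ℝ, 0 < x →
    Tendsto (fun τ : ℝ => (1 / Real.log τ) * Real.log (D (ψ (τ ^ x)) - D (τ ^ x)))
      atTop (nhds x))
include hψ

theorem tendsto_log_D_exp_mul_log {c : ℝ} (hc : 0 < c) :
    Tendsto (fun τ : ℝ => (1 / Real.log τ) *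
        Real.log (D (ψ (Real.exp (c * Real.log τ))) - D (Real.exp (c * Real.log τ))))
      atTop (nhds c) := by
  refine (hψ c hc).congr' ?_
  filter_upwards [eventually_gt_atTop (0 : ℝ)] with τ hτ
  rw [Real.rpow_def_of_pos hτ, mul_comm (Real.log τ) c]

theorem tendsto_log_D_exp_mul_log_nhds_one_iff {c : ℝ} (hc : 0 < c) :
    Tendsto (fun τ : ℝ => (1 / Real.log τ) *
        Real.log (D (ψ (Real.exp (c * Real.log τ))) - D (Real.exp (c * Real.log τ))))
      atTop (nhds 1) ↔ c = 1 :=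
  ⟨fun h1 => tendsto_nhds_unique (tendsto_log_D_exp_mul_log hψ hc) h1,
    by rintro rfl; exact tendsto_log_D_exp_mul_log hψ hc⟩

end

theorem fermat_ratio_eq_one_iff {x y z n : ℕ} (hz : 0 < z) :
    ((x : ℝ) ^ n + (y : ℝ) ^ n) / (z : ℝ) ^ n = 1 ↔ x ^ n + y ^ n = z ^ n := by
  rw [div_eq_one_iff_eq (by positivity)]
  exact_mod_cast Iff.rfl

/-- Theorem 2: the second `D`-equivalent of the Fermat–Wiles theorem. -/
theorem D_equivalent_fermat_wiles_two (ψ : ℝ → ℝ)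
    (h : ∀ x : ℝ, 0 < x →
      Tendsto (fun τ : ℝ => (1 / Real.log τ) * Real.log (D (ψ (τ ^ x)) - D (τ ^ x)))
        atTop (nhds x)) :
    (∀ x y z n : ℕ, 0 < x → 0 < y → 0 < z → 3 ≤ n →
      ¬ Tendsto (fun τ : ℝ => (1 / Real.log τ) *
          Real.log (D (ψ (Real.exp (((x:ℝ)^n + (y:ℝ)^n) / (z:ℝ)^n * Real.log τ))) -
            D (Real.exp (((x:ℝ)^n + (y:ℝ)^n) / (z:ℝ)^n * Real.log τ))))
        atTop (nhds 1)) ↔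
    (∀ x y z n : ℕ, 0 < x → 0 < y → 0 < z → 3 ≤ n → x^n + y^n ≠ z^n) := by
  refine forall₄_congr fun x y z n => forall₄_congr fun hx _ hz _ => not_congr ?_
  have hF : 0 < ((x : ℝ) ^ n + (y : ℝ) ^ n) / (z : ℝ) ^ n := by positivity
  rw [tendsto_log_D_exp_mul_log_nhds_one_iff h hF, fermat_ratio_eq_one_iff hz]
end
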